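/- arXiv:1907.05974 — 5 statements merged into one kernel-verified Lean document; each statement's English description precedes it below -/
import Mathlib

section
/- A set R = {v₁,...,vₙ} of k-mers resolves the Hamming graph H_{k,a} if and only if the only solution z ∈ ℝ^{ak} to Az = 0, subject to the constraint that each of the k consecutive length-a blocks of z is a difference of two canonical basis vectors of ℝ^a, is z = 0, where A is the n×(ak) matrix whose i-th row is vec(Vᵢ) with Vᵢ the one-hot encoding of vᵢ. -/
/-!
Write `e(u) ∈ ℝ^{k×a}` for the one-hot encoding of a k-mer `u`. Then `⟪e(w), e(u)⟫ = k - d(u, w)`,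
so `A (e(u) - e(v))` has entries `d(v, vᵢ) - d(u, vᵢ)`. The vectors whose blocks are differences of
canonical vectors are exactly the `e(u) - e(v)`, and `e(u) - e(v) = 0` iff `u = v`; hence the kernel
condition says precisely that no two distinct k-mers have the same distances to all of `R`.
-/

open Finset Matrix

namespace OneHot

variable {ι α κ : Type*} [DecidableEq α]

def oneHot (u : ι → α) : ι × α → ℝ := fun p => if p.2 = u p.1 then 1 else 0

def oneHotMatrix (vs : κ → ι → α) : Matrix κ (ι × α) ℝ := Matrix.of fun i => oneHot (vs i)

lemma oneHot_sub_oneHot_eq_zero_iff {u v : ι → α} : oneHot u - oneHot v = 0 ↔ u = v := by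
  refine ⟨fun h => funext fun j => ?_, fun h => h ▸ sub_self _⟩
  have hj := congrFun h (j, u j)
  by_contra hne
  simp [oneHot, hne] at hj

lemma exists_eq_oneHot_sub_oneHot_iff {z : ι × α → ℝ} :
    (∃ u v : ι → α, z = oneHot u - oneHot v) ↔
      ∀ j, ∃ p q : α, ∀ l, z (j, l) = (if l = p then (1 : ℝ) else 0) - (if l = q then 1 else 0) := by
  constructor
  · rintro ⟨u, v, rfl⟩ j
    exact ⟨u j, v j, fun l => rfl⟩
  · intro h
    choose u v h using h
    exact ⟨u, v, funext fun p => h p.1 p.2⟩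

variable [Fintype ι] [Fintype α]

lemma oneHot_dotProduct (w : ι → α) (z : ι × α → ℝ) : oneHot w ⬝ᵥ z = ∑ j, z (j, w j) := by
  simp only [dotProduct, Fintype.sum_prod_type, oneHot, ite_mul, one_mul, zero_mul,
    sum_ite_eq', mem_univ, if_true]

lemma oneHot_dotProduct_oneHot (w u : ι → α) :
    oneHot w ⬝ᵥ oneHot u = Fintype.card ι - hammingDist u w := by
  have hsplit := card_filter_add_card_filter_not (s := univ) (p := fun j => w j = u j)
  simp only [card_univ] at hsplit
  rw [oneHot_dotProduct, ← hsplit, hammingDist]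
  simp [oneHot, sum_boole, ne_comm]

lemma oneHotMatrix_mulVec_oneHot_sub_oneHot_eq_zero_iff (vs : κ → ι → α) (u v : ι → α) :
    oneHotMatrix vs *ᵥ (oneHot u - oneHot v) = 0 ↔
      ∀ i, hammingDist u (vs i) = hammingDist v (vs i) := by
  simp only [funext_iff, Pi.zero_apply]
  refine forall_congr' fun i => ?_
  change oneHot (vs i) ⬝ᵥ (oneHot u - oneHot v) = 0 ↔ _
  rw [dotProduct_sub, oneHot_dotProduct_oneHot, oneHot_dotProduct_oneHot, sub_eq_zero,
    sub_right_inj, Nat.cast_inj]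

end OneHot

open OneHot

theorem stmt_3_general {a k n : ℕ}
    (vs : Fin n → (Fin k → Fin a))
    (A : Matrix (Fin n) (Fin k × Fin a) ℝ)
    (hA : ∀ i p, A i p = if p.2 = vs i p.1 then 1 else 0) :
    (∀ u v : Fin k → Fin a, u ≠ v → ∃ i, hammingDist u (vs i) ≠ hammingDist v (vs i)) ↔
    (∀ z : Fin k × Fin a → ℝ,
      A.mulVec z = 0 →
      (∀ j : Fin k, ∃ p q : Fin a, ∀ l : Fin a,
        z (j, l) = (if l = p then (1:ℝ) else 0) - (if l = q then 1 else 0)) →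
      z = 0) := by
  obtain rfl : A = oneHotMatrix vs := Matrix.ext hA
  constructor
  · intro hres z hz hblocks
    obtain ⟨u, v, rfl⟩ := exists_eq_oneHot_sub_oneHot_iff.2 hblocks
    rw [oneHotMatrix_mulVec_oneHot_sub_oneHot_eq_zero_iff] at hz
    by_contra hne
    obtain ⟨i, hi⟩ := hres u v (mt oneHot_sub_oneHot_eq_zero_iff.2 hne)
    exact hi (hz i)
  · intro hker u v hne
    by_contra! hsame
    refine hne (oneHot_sub_oneHot_eq_zero_iff.1 (hker _ ?_ ?_))
    · exact (oneHotMatrix_mulVec_oneHot_sub_oneHot_eq_zero_iff vs u v).2 hsame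
    · exact exists_eq_oneHot_sub_oneHot_iff.1 ⟨u, v, rfl⟩

theorem stmt_3 {a k n : ℕ} (ha : 2 ≤ a) (hk : 1 ≤ k) (hn : 1 ≤ n)
    (vs : Fin n → (Fin k → Fin a))
    (A : Matrix (Fin n) (Fin k × Fin a) ℝ)
    (hA : ∀ i p, A i p = if p.2 = vs i p.1 then 1 else 0) :
    (∀ u v : Fin k → Fin a, u ≠ v → ∃ i, hammingDist u (vs i) ≠ hammingDist v (vs i)) ↔
    (∀ z : Fin k × Fin a → ℝ,
      A.mulVec z = 0 →
      (∀ j : Fin k, ∃ p q : Fin a, ∀ l : Fin a,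
        z (j, l) = (if l = p then (1:ℝ) else 0) - (if l = q then 1 else 0)) →
      z = 0) :=
  stmt_3_general vs A hA
end

section
/- A set R = {v₁,...,vₙ} of binary k-mers resolves the hypercube H_{k,2} if and only if the kernel of the n×k matrix B, whose i-th row is vᵢ - v̄ᵢ (where v̄ᵢ flips 0s and 1s), intersects {0,±1}^k only in the zero vector. -/
/-!
Write `z = v - u` for bit vectors `u, v`; the vectors in `{0, ±1}^k` are exactly these
differences, and `z = 0` iff `u = v`. For a bit `w`, `(w - w̄) (b - a) = [a ≠ w] - [b ≠ w]`,
so summing over coordinates, row `i` of `B z` is `d(u, vᵢ) - d(v, vᵢ)`. Hence `B z = 0` says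
exactly that no `vᵢ` separates `u` from `v`.
-/

open Finset

variable {ι : Type*}

lemma hammingDist_cast_eq_sum_ite [Fintype ι] {β : Type*} [DecidableEq β] (u w : ι → β) :
    (hammingDist u w : ℝ) = ∑ j, if u j = w j then 0 else 1 := by
  simp only [hammingDist, card_filter, Nat.cast_sum, Nat.cast_ite, Nat.cast_one, Nat.cast_zero]
  exact sum_congr rfl fun j _ => by split_ifs <;> simp_all

lemma Fin.two_flip_mul_sub (a b w : Fin 2) :
    ((w : ℝ) - (1 - w)) * ((b : ℝ) - a) =
      (if a = w then 0 else 1) - (if b = w then 0 else 1) := by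
  fin_cases a <;> fin_cases b <;> fin_cases w <;> norm_num

def bitDiff (u v : ι → Fin 2) : ι → ℝ := fun j => (v j : ℝ) - u j

lemma bitDiff_mem (u v : ι → Fin 2) (j : ι) :
    bitDiff u v j = 0 ∨ bitDiff u v j = 1 ∨ bitDiff u v j = -1 := by
  unfold bitDiff
  generalize u j = a
  generalize v j = b
  fin_cases a <;> fin_cases b <;> norm_num

lemma exists_bitDiff_eq {z : ι → ℝ} (hz : ∀ j, z j = 0 ∨ z j = 1 ∨ z j = -1) :
    ∃ u v : ι → Fin 2, bitDiff u v = z := by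
  refine ⟨fun j => if z j = -1 then 1 else 0, fun j => if z j = 1 then 1 else 0, ?_⟩
  funext j
  rcases hz j with h | h | h <;> norm_num [bitDiff, h]

lemma bitDiff_eq_zero_iff {u v : ι → Fin 2} : bitDiff u v = 0 ↔ u = v := by
  simp only [funext_iff, bitDiff, Pi.zero_apply, sub_eq_zero, Nat.cast_inj, Fin.val_inj]
  exact ⟨fun h j => (h j).symm, fun h j => (h j).symm⟩

lemma mulVec_bitDiff [Fintype ι] {n : Type*} (vs : n → ι → Fin 2) (B : Matrix n ι ℝ)
    (hB : ∀ i j, B i j = (vs i j : ℝ) - (1 - (vs i j : ℝ))) (u v : ι → Fin 2) (i : n) :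
    B.mulVec (bitDiff u v) i = hammingDist u (vs i) - hammingDist v (vs i) := by
  simp only [Matrix.mulVec, dotProduct, hB, bitDiff, Fin.two_flip_mul_sub,
    hammingDist_cast_eq_sum_ite, sum_sub_distrib]

theorem stmt_5_general {k n : ℕ}
    (vs : Fin n → (Fin k → Fin 2))
    (B : Matrix (Fin n) (Fin k) ℝ)
    (hB : ∀ i j, B i j = (vs i j : ℝ) - (1 - (vs i j : ℝ))) :
    (∀ u v : Fin k → Fin 2, u ≠ v → ∃ i, hammingDist u (vs i) ≠ hammingDist v (vs i)) ↔
    (∀ z : Fin k → ℝ, B.mulVec z = 0 →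
      (∀ j, z j = 0 ∨ z j = 1 ∨ z j = -1) → z = 0) := by
  constructor
  · intro hres z hBz hz
    obtain ⟨u, v, rfl⟩ := exists_bitDiff_eq hz
    by_contra hne
    obtain ⟨i, hi⟩ := hres u v (mt bitDiff_eq_zero_iff.mpr hne)
    have hrow := congrFun hBz i
    rw [mulVec_bitDiff vs B hB, Pi.zero_apply, sub_eq_zero] at hrow
    exact hi (mod_cast hrow)
  · intro hker u v huv
    by_contra! hsame
    have hBz : B.mulVec (bitDiff u v) = 0 := by
      funext i
      rw [mulVec_bitDiff vs B hB, hsame i, sub_self, Pi.zero_apply]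
    exact huv (bitDiff_eq_zero_iff.mp (hker _ hBz (bitDiff_mem u v)))

theorem stmt_5 {k n : ℕ} (hk : 1 ≤ k) (hn : 1 ≤ n)
    (vs : Fin n → (Fin k → Fin 2))
    (B : Matrix (Fin n) (Fin k) ℝ)
    (hB : ∀ i j, B i j = (vs i j : ℝ) - (1 - (vs i j : ℝ))) :
    (∀ u v : Fin k → Fin 2, u ≠ v → ∃ i, hammingDist u (vs i) ≠ hammingDist v (vs i)) ↔
    (∀ z : Fin k → ℝ, B.mulVec z = 0 →
      (∀ j, z j = 0 ∨ z j = 1 ∨ z j = -1) → z = 0) :=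
  stmt_5_general vs B hB
end

section
/- Let R = {v₁,...,vₙ} be a set of binary k-mers containing the all-ones vector 1^k, and let C be the n×k real matrix whose rows are the vᵢ. Then R resolves H_{k,2} if and only if ker(C) ∩ {0,±1}^k = {0}. -/
/-!
For binary `u v r`, `d(u, r) - d(v, r) = ∑ⱼ zⱼ - 2 ⟨r, z⟩` with `z = u - v ∈ {0, ±1}^k`.
Taking `r = 1^k ∈ R` gives `d(u, 1^k) - d(v, 1^k) = -∑ⱼ zⱼ`, so `u` and `v` have the same
distances to every `r ∈ R` exactly when `⟨r, z⟩ = 0` for all `r ∈ R`, i.e. `C z = 0`.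
Every `z ∈ {0, ±1}^k` is such a difference `u - v`, and `z = 0` iff `u = v`.
-/

open Finset

variable {k : ℕ}

def binDiff (u v : Fin k → Fin 2) : Fin k → ℝ := fun j => (u j : ℝ) - v j

lemma binDiff_eq_zero_iff {u v : Fin k → Fin 2} : binDiff u v = 0 ↔ u = v := by
  refine ⟨fun h => funext fun j => Fin.val_injective ?_, ?_⟩
  · exact_mod_cast sub_eq_zero.mp (congrFun h j)
  · rintro rfl
    ext
    simp [binDiff]

lemma binDiff_apply_mem (u v : Fin k → Fin 2) (j : Fin k) :
    binDiff u v j = 0 ∨ binDiff u v j = 1 ∨ binDiff u v j = -1 := by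
  unfold binDiff
  generalize u j = a, v j = b
  fin_cases a <;> fin_cases b <;> norm_num

lemma exists_binDiff_eq {z : Fin k → ℝ} (hz : ∀ j, z j = 0 ∨ z j = 1 ∨ z j = -1) :
    ∃ u v : Fin k → Fin 2, binDiff u v = z := by
  refine ⟨fun j => if z j = 1 then 1 else 0, fun j => if z j = -1 then 1 else 0,
    funext fun j => ?_⟩
  rcases hz j with h | h | h <;> simp [binDiff, h] <;> norm_num

lemma hammingDist_cast_eq_sum (x y : Fin k → Fin 2) :
    (hammingDist x y : ℝ) = ∑ j, ((x j : ℝ) + y j - 2 * x j * y j) := by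
  rw [hammingDist, card_filter, Nat.cast_sum]
  refine sum_congr rfl fun j _ => ?_
  generalize x j = a, y j = b
  fin_cases a <;> fin_cases b <;> norm_num

lemma hammingDist_sub_hammingDist (u v r : Fin k → Fin 2) :
    (hammingDist u r : ℝ) - hammingDist v r
      = ∑ j, binDiff u v j - 2 * ∑ j, (r j : ℝ) * binDiff u v j := by
  rw [hammingDist_cast_eq_sum, hammingDist_cast_eq_sum, ← sum_sub_distrib, mul_sum,
    ← sum_sub_distrib]
  exact sum_congr rfl fun j _ => by unfold binDiff; ring

lemma forall_hammingDist_eq_iff_mulVec_binDiff_eq_zero {n : ℕ} (vs : Fin n → Fin k → Fin 2)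
    (hone : ∃ i, vs i = fun _ => 1) (u v : Fin k → Fin 2) :
    (∀ i, hammingDist u (vs i) = hammingDist v (vs i)) ↔
      (Matrix.of fun i j => (vs i j : ℝ)).mulVec (binDiff u v) = 0 := by
  obtain ⟨i₀, hi₀⟩ := hone
  have hdiff i := hammingDist_sub_hammingDist u v (vs i)
  have hsum : ∑ j, binDiff u v j = ∑ j, (vs i₀ j : ℝ) * binDiff u v j := by simp [hi₀]
  simp only [funext_iff, Matrix.mulVec, dotProduct, Matrix.of_apply, Pi.zero_apply]
  constructor
  · intro h i
    have h₀ := hdiff i₀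
    have hi := hdiff i
    rw [h i₀, sub_self, ← hsum] at h₀
    rw [h i, sub_self] at hi
    linarith
  · intro h i
    have hi := hdiff i
    rw [h i, hsum, h i₀] at hi
    have hℝ : (hammingDist u (vs i) : ℝ) = hammingDist v (vs i) := by linarith
    exact_mod_cast hℝ

theorem stmt_6_general {k n : ℕ}
    (vs : Fin n → (Fin k → Fin 2))
    (hone : ∃ i, vs i = fun _ => 1)
    (C : Matrix (Fin n) (Fin k) ℝ)
    (hC : ∀ i j, C i j = (vs i j : ℝ)) :
    (∀ u v : Fin k → Fin 2, u ≠ v → ∃ i, hammingDist u (vs i) ≠ hammingDist v (vs i)) ↔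
    (∀ z : Fin k → ℝ, C.mulVec z = 0 →
      (∀ j, z j = 0 ∨ z j = 1 ∨ z j = -1) → z = 0) := by
  obtain rfl : C = Matrix.of fun i j => (vs i j : ℝ) := Matrix.ext hC
  have hiff := forall_hammingDist_eq_iff_mulVec_binDiff_eq_zero vs hone
  constructor
  · intro hres z hz hzval
    obtain ⟨u, v, rfl⟩ := exists_binDiff_eq hzval
    by_contra hne
    obtain ⟨i, hi⟩ := hres u v (mt binDiff_eq_zero_iff.mpr hne)
    exact hi ((hiff u v).mpr hz i)
  · intro hker u v huv
    by_contra! h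
    exact huv (binDiff_eq_zero_iff.mp (hker _ ((hiff u v).mp h) (binDiff_apply_mem u v)))

theorem stmt_6 {k n : ℕ} (hk : 1 ≤ k) (hn : 1 ≤ n)
    (vs : Fin n → (Fin k → Fin 2))
    (hone : ∃ i, vs i = fun _ => 1)
    (C : Matrix (Fin n) (Fin k) ℝ)
    (hC : ∀ i j, C i j = (vs i j : ℝ)) :
    (∀ u v : Fin k → Fin 2, u ≠ v → ∃ i, hammingDist u (vs i) ≠ hammingDist v (vs i)) ↔
    (∀ z : Fin k → ℝ, C.mulVec z = 0 →
      (∀ j, z j = 0 ∨ z j = 1 ∨ z j = -1) → z = 0) :=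
  stmt_6_general vs hone C hC
end

section
/- A vector z ∈ ℝ^{ka} satisfies the polynomial system P = 0 (where P consists of zᵢ³ - zᵢ = 0 for all i, the sum of each consecutive length-a block of z equals 0, and for each block the quantity (2 - Σzⱼ²)·(Σzⱼ²) = 0 with sums over that block) if and only if each of the k consecutive length-a blocks of z is the difference of two canonical basis vectors of ℝ^a. -/
/-!
Every coordinate of a block is a root of `x³ - x`, hence lies in `{-1, 0, 1}`. Writing `P` and `N`
for the sets of coordinates equal to `1` and `-1`, the sum of the block is `#P - #N` and its sum of
squares is `#P + #N`. The two remaining equations then force `#P = #N ≤ 1`, i.e. the block is `0`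
or `e_p - e_q` with `p ≠ q`.
-/

open Finset

lemma eq_neg_one_or_zero_or_one_of_cube_sub_self {x : ℝ} (hx : x ^ 3 - x = 0) :
    x = -1 ∨ x = 0 ∨ x = 1 := by
  have : (x + 1) * (x * (x - 1)) = 0 := by linear_combination hx
  rcases mul_eq_zero.1 this with h | h
  · exact .inl (by linarith)
  rcases mul_eq_zero.1 h with h | h
  · exact .inr (.inl h)
  · exact .inr (.inr (by linarith))

section TernaryVector

variable {ι : Type*} {v : ι → ℝ}

lemma eq_ite_one_sub_ite_neg_one (hv : ∀ i, v i = -1 ∨ v i = 0 ∨ v i = 1) (i : ι) :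
    v i = (if v i = 1 then 1 else 0) - (if v i = -1 then 1 else 0) := by
  rcases hv i with h | h | h <;> norm_num [h]

variable [Fintype ι]

lemma sum_eq_card_sub_card (hv : ∀ i, v i = -1 ∨ v i = 0 ∨ v i = 1) :
    ∑ i, v i = (#{i | v i = 1} : ℝ) - #{i | v i = -1} := by
  rw [Finset.sum_congr rfl fun i _ => eq_ite_one_sub_ite_neg_one hv i, sum_sub_distrib,
    sum_boole, sum_boole]

lemma sum_sq_eq_card_add_card (hv : ∀ i, v i = -1 ∨ v i = 0 ∨ v i = 1) :
    ∑ i, v i ^ 2 = (#{i | v i = 1} : ℝ) + #{i | v i = -1} := by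
  have hsq : ∀ i, v i ^ 2 = (if v i = 1 then 1 else 0) + (if v i = -1 then 1 else 0) := by
    intro i
    rcases hv i with h | h | h <;> norm_num [h]
  rw [Finset.sum_congr rfl fun i _ => hsq i, sum_add_distrib, sum_boole, sum_boole]

end TernaryVector

lemma eq_and_eq_zero_or_eq_one_of_sub_eq_zero_of_mul_eq_zero {m n : ℕ} (hsum : (m : ℝ) - n = 0)
    (hsq : (2 - ((m : ℝ) + n)) * ((m : ℝ) + n) = 0) : m = n ∧ (m = 0 ∨ m = 1) := by
  obtain rfl : m = n := by exact_mod_cast sub_eq_zero.1 hsum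
  refine ⟨rfl, ?_⟩
  rcases mul_eq_zero.1 hsq with h | h
  · exact .inr (by exact_mod_cast (by linarith : (m : ℝ) = 1))
  · exact .inl (by exact_mod_cast (by linarith : (m : ℝ) = 0))

section DiffOfSingles

variable {ι : Type*} [Fintype ι] [DecidableEq ι]

lemma exists_eq_single_sub_single_of_cube_sum_sumSq {v : ι → ℝ} [Nonempty ι]
    (hcube : ∀ i, v i ^ 3 - v i = 0) (hsum : ∑ i, v i = 0)
    (hsq : (2 - ∑ i, v i ^ 2) * ∑ i, v i ^ 2 = 0) :
    ∃ p q, v = Pi.single p 1 - Pi.single q 1 := by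
  have hv i := eq_neg_one_or_zero_or_one_of_cube_sub_self (hcube i)
  rw [sum_eq_card_sub_card hv] at hsum
  rw [sum_sq_eq_card_add_card hv] at hsq
  obtain ⟨hcard, hzero | hone⟩ := eq_and_eq_zero_or_eq_one_of_sub_eq_zero_of_mul_eq_zero hsum hsq
  · have hP := filter_eq_empty_iff.1 (card_eq_zero.1 hzero)
    have hN := filter_eq_empty_iff.1 (card_eq_zero.1 (hcard ▸ hzero))
    refine ⟨Classical.arbitrary ι, Classical.arbitrary ι, ?_⟩
    ext i
    rcases hv i with h | h | h
    · exact absurd h (hN (mem_univ i))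
    · simp [h]
    · exact absurd h (hP (mem_univ i))
  · obtain ⟨p, hp⟩ := card_eq_one.1 hone
    obtain ⟨q, hq⟩ := card_eq_one.1 (hcard ▸ hone)
    refine ⟨p, q, funext fun i => ?_⟩
    have hip : v i = 1 ↔ i = p := by simpa using Finset.ext_iff.1 hp i
    have hiq : v i = -1 ↔ i = q := by simpa using Finset.ext_iff.1 hq i
    rw [eq_ite_one_sub_ite_neg_one hv i]
    simp only [hip, hiq, Pi.sub_apply, Pi.single_apply]

lemma single_sub_single_cube_sum_sumSq (p q : ι) :
    let v : ι → ℝ := Pi.single p 1 - Pi.single q 1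
    (∀ i, v i ^ 3 - v i = 0) ∧ ∑ i, v i = 0 ∧ (2 - ∑ i, v i ^ 2) * ∑ i, v i ^ 2 = 0 := by
  refine ⟨fun i => ?_, ?_, ?_⟩
  · simp only [Pi.sub_apply, Pi.single_apply]
    split_ifs <;> norm_num
  · simp [sum_sub_distrib]
  · by_cases hpq : p = q
    · simp [hpq]
    · norm_num [Pi.single_apply, sub_sq, sum_add_distrib, sum_sub_distrib, Ne.symm hpq]

theorem cube_sum_sumSq_eq_zero_iff_exists_eq_single_sub_single [Nonempty ι] (v : ι → ℝ) :
    ((∀ i, v i ^ 3 - v i = 0) ∧ ∑ i, v i = 0 ∧ (2 - ∑ i, v i ^ 2) * ∑ i, v i ^ 2 = 0) ↔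
      ∃ p q, v = Pi.single p 1 - Pi.single q 1 := by
  constructor
  · rintro ⟨hcube, hsum, hsq⟩
    exact exists_eq_single_sub_single_of_cube_sum_sumSq hcube hsum hsq
  · rintro ⟨p, q, rfl⟩
    exact single_sub_single_cube_sum_sumSq p q

end DiffOfSingles

theorem stmt_8_general {a k : ℕ} (ha : 2 ≤ a) (z : Fin k × Fin a → ℝ) :
    ((∀ p : Fin k × Fin a, z p ^ 3 - z p = 0) ∧
     (∀ j : Fin k, ∑ l : Fin a, z (j, l) = 0) ∧
     (∀ j : Fin k,
       (2 - ∑ l : Fin a, z (j, l) ^ 2) * (∑ l : Fin a, z (j, l) ^ 2) = 0)) ↔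
    (∀ j : Fin k, ∃ p q : Fin a, ∀ l : Fin a,
      z (j, l) = (if l = p then (1:ℝ) else 0) - (if l = q then 1 else 0)) := by
  have : Nonempty (Fin a) := ⟨⟨0, by omega⟩⟩
  simp only [Prod.forall, ← forall_and]
  refine forall_congr' fun j => ?_
  simp only [cube_sum_sumSq_eq_zero_iff_exists_eq_single_sub_single, funext_iff, Pi.sub_apply,
    Pi.single_apply]

theorem stmt_8 {a k : ℕ} (ha : 2 ≤ a) (hk : 1 ≤ k) (z : Fin k × Fin a → ℝ) :
    ((∀ p : Fin k × Fin a, z p ^ 3 - z p = 0) ∧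
     (∀ j : Fin k, ∑ l : Fin a, z (j, l) = 0) ∧
     (∀ j : Fin k,
       (2 - ∑ l : Fin a, z (j, l) ^ 2) * (∑ l : Fin a, z (j, l) ^ 2) = 0)) ↔
    (∀ j : Fin k, ∃ p q : Fin a, ∀ l : Fin a,
      z (j, l) = (if l = p then (1:ℝ) else 0) - (if l = q then 1 else 0)) :=
  stmt_8_general ha z
end

section
/- A set R of k-mers resolves H_{k,a} if and only if ker(A) ∩ {P = 0} = {0}, where A is the matrix whose rows are the column-major vectorizations of the one-hot encodings of the elements of R, and {P = 0} is the set of z ∈ ℝ^{ak} each of whose k length-a blocks is the difference of two canonical vectors of ℝ^a. -/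
/-!
Every block of a vector in `{P = 0}` is `e_p - e_q`, so such vectors are exactly the differences
`x(u) - x(v)` of one-hot encodings of two k-mers `u, v`, and the difference vanishes iff `u = v`.
The row of `A` belonging to `w` picks out one entry per block, so `⟪vec x(w), x(u) - x(v)⟫` counts
the positions where `u` agrees with `w` minus those where `v` does, i.e. `d(v, w) - d(u, w)`.
Hence `x(u) - x(v)` lies in `ker A` iff `u` and `v` have the same distance vector to `R`.
-/

section OneHot

variable {ι α : Type*} [DecidableEq α]

/-- `vec (x(u) - x(v))`, with the column-major index of `vec` written as (position, letter). -/
def oneHotDiff (u v : ι → α) : ι × α → ℝ :=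
  fun x => (if x.2 = u x.1 then 1 else 0) - (if x.2 = v x.1 then 1 else 0)

lemma oneHotDiff_eq_zero_iff {u v : ι → α} : oneHotDiff u v = 0 ↔ u = v := by
  refine ⟨fun h => funext fun j => by_contra fun hj => ?_, fun h => ?_⟩
  · simpa [oneHotDiff, hj] using congrFun h (j, u j)
  · subst h
    funext x
    simp [oneHotDiff]

lemma exists_oneHotDiff_iff (z : ι × α → ℝ) :
    (∀ j, ∃ p q : α, ∀ l, z (j, l) = (if l = p then 1 else 0) - (if l = q then 1 else 0)) ↔
      ∃ u v : ι → α, z = oneHotDiff u v := by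
  constructor
  · intro h
    choose u v huv using h
    exact ⟨u, v, funext fun x => huv x.1 x.2⟩
  · rintro ⟨u, v, rfl⟩ j
    exact ⟨u j, v j, fun l => rfl⟩

variable [Fintype ι]

lemma sum_oneHotDiff_apply (u v w : ι → α) :
    ∑ j, oneHotDiff u v (j, w j) = (hammingDist v w : ℝ) - hammingDist u w := by
  have hterm : ∀ j, oneHotDiff u v (j, w j) =
      (if v j ≠ w j then 1 else 0) - (if u j ≠ w j then 1 else 0) := by
    intro j
    unfold oneHotDiff
    split_ifs <;> simp_all
  simp only [hterm, Finset.sum_sub_distrib, Finset.sum_boole, hammingDist]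

lemma mulVec_apply_eq_sum_of_oneHot [Fintype α] {m : Type*} (vs : m → ι → α)
    (A : Matrix m (ι × α) ℝ) (hA : ∀ i p, A i p = if p.2 = vs i p.1 then 1 else 0)
    (z : ι × α → ℝ) (i : m) : A.mulVec z i = ∑ j, z (j, vs i j) := by
  simp only [Matrix.mulVec, dotProduct, hA, Fintype.sum_prod_type, ite_mul, one_mul, zero_mul,
    Finset.sum_ite_eq', Finset.mem_univ, if_true]

lemma mulVec_oneHotDiff_eq_zero_iff [Fintype α] {m : Type*} (vs : m → ι → α)
    (A : Matrix m (ι × α) ℝ) (hA : ∀ i p, A i p = if p.2 = vs i p.1 then 1 else 0)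
    (u v : ι → α) :
    A.mulVec (oneHotDiff u v) = 0 ↔ ∀ i, hammingDist u (vs i) = hammingDist v (vs i) := by
  refine funext_iff.trans (forall_congr' fun i => ?_)
  rw [mulVec_apply_eq_sum_of_oneHot vs A hA, sum_oneHotDiff_apply, Pi.zero_apply, sub_eq_zero,
    Nat.cast_inj, eq_comm]

end OneHot

theorem stmt_9_general {a k n : ℕ} (ha : 2 ≤ a)
    (vs : Fin n → (Fin k → Fin a))
    (A : Matrix (Fin n) (Fin k × Fin a) ℝ)
    (hA : ∀ i p, A i p = if p.2 = vs i p.1 then 1 else 0) :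
    (∀ u v : Fin k → Fin a, u ≠ v → ∃ i, hammingDist u (vs i) ≠ hammingDist v (vs i)) ↔
    {z : Fin k × Fin a → ℝ | A.mulVec z = 0} ∩
      {z : Fin k × Fin a → ℝ |
        ∀ j : Fin k, ∃ p q : Fin a, ∀ l : Fin a,
          z (j, l) = (if l = p then (1:ℝ) else 0) - (if l = q then 1 else 0)} = {0} := by
  obtain ⟨u₀⟩ : Nonempty (Fin k → Fin a) := ⟨fun _ => ⟨0, by omega⟩⟩
  have hzero : oneHotDiff u₀ u₀ = 0 := oneHotDiff_eq_zero_iff.2 rfl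
  rw [Set.eq_singleton_iff_unique_mem]
  simp only [Set.mem_inter_iff, Set.mem_ofPred_eq, exists_oneHotDiff_iff]
  rw [and_iff_right ⟨A.mulVec_zero, _, _, hzero.symm⟩]
  constructor
  · rintro hres _ ⟨hker, u, v, rfl⟩
    rw [mulVec_oneHotDiff_eq_zero_iff vs A hA] at hker
    by_contra hne
    obtain ⟨i, hi⟩ := hres u v (mt oneHotDiff_eq_zero_iff.2 hne)
    exact hi (hker i)
  · intro hker u v huv
    by_contra! hdist
    exact huv (oneHotDiff_eq_zero_iff.1
      (hker _ ⟨(mulVec_oneHotDiff_eq_zero_iff vs A hA u v).2 hdist, u, v, rfl⟩))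

theorem stmt_9 {a k n : ℕ} (ha : 2 ≤ a) (hk : 1 ≤ k) (hn : 1 ≤ n)
    (vs : Fin n → (Fin k → Fin a))
    (A : Matrix (Fin n) (Fin k × Fin a) ℝ)
    (hA : ∀ i p, A i p = if p.2 = vs i p.1 then 1 else 0) :
    (∀ u v : Fin k → Fin a, u ≠ v → ∃ i, hammingDist u (vs i) ≠ hammingDist v (vs i)) ↔
    {z : Fin k × Fin a → ℝ | A.mulVec z = 0} ∩
      {z : Fin k × Fin a → ℝ |
        ∀ j : Fin k, ∃ p q : Fin a, ∀ l : Fin a,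
          z (j, l) = (if l = p then (1:ℝ) else 0) - (if l = q then 1 else 0)} = {0} :=
  stmt_9_general ha vs A hA
end
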